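/- Fix D ≥ 1. There exists a constant C > 0 (depending on the quadratic forms q_k and on D) such that the following holds for all r ≥ 1, all dyadic σ ∈ [r^{−1}, 1], all h ∈ ℝ with |h| ≤ σ², and all η ∈ B_d(0,1): whenever ω = h c(η) + Σ_{i=1}^d ℓ_i t_i(η) + Σ_{j=1}^l c_j n_j(η) with |ℓ_i| ≤ D r^{−1} σ for all i and |c_j| ≤ D r^{−2} for all j, there exist a lattice point ξ ∈ r^{−1}σ^{−1} ℤ^d with ‖ξ − η‖ ≤ C r^{−1} σ^{−1} and coefficients ℓ'_i, c'_j ∈ ℝ with |ℓ'_i| ≤ C D r^{−1} σ and |c'_j| ≤ C D r^{−2} such that ω = h c(ξ) + Σ_{i=1}^d ℓ'_i t_i(ξ) + Σ_{j=1}^l c'_j n_j(ξ). -/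

import Mathlib

noncomputable section

/-- `ℝ^{n+1}` with `n = d + l`, coordinates split as `(ξ, ζ, h)`. -/
abbrev ConeSpace (d l : ℕ) := EuclideanSpace ℝ (Fin d ⊕ Fin l ⊕ Unit)

/-- The affine quadratic form `q_k(ξ) = (1/2)⟨ξ, A_k ξ⟩ + ⟨b_k, ξ⟩ + c_k`. -/
def qForm {d l : ℕ} (A : Fin l → Matrix (Fin d) (Fin d) ℝ)
    (b : Fin l → EuclideanSpace ℝ (Fin d)) (c0 : Fin l → ℝ)
    (k : Fin l) (ξ : EuclideanSpace ℝ (Fin d)) : ℝ :=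
  (1/2) * dotProduct (ξ : Fin d → ℝ) ((A k).mulVec ξ)
    + dotProduct (b k : Fin d → ℝ) ξ + c0 k

/-- `∂_i q_k(ξ) = (A_k ξ + b_k)_i`. -/
def qGrad {d l : ℕ} (A : Fin l → Matrix (Fin d) (Fin d) ℝ)
    (b : Fin l → EuclideanSpace ℝ (Fin d)) (k : Fin l)
    (ξ : EuclideanSpace ℝ (Fin d)) (i : Fin d) : ℝ :=
  ((A k).mulVec ξ) i + b k i

/-- The central line vector `c(η) = (η, q_1(η), …, q_l(η), 1) ∈ ℝ^{n+1}`. -/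
def cVec {d l : ℕ} (A : Fin l → Matrix (Fin d) (Fin d) ℝ)
    (b : Fin l → EuclideanSpace ℝ (Fin d)) (c0 : Fin l → ℝ)
    (η : EuclideanSpace ℝ (Fin d)) : ConeSpace d l :=
  WithLp.toLp 2 fun x => match x with
  | Sum.inl i => η i
  | Sum.inr (Sum.inl k) => qForm A b c0 k η
  | Sum.inr (Sum.inr _) => 1

/-- The tangent vector `t_i(η) = (e_i, ∂_i q_1(η), …, ∂_i q_l(η), 0) ∈ ℝ^{n+1}`. -/
def tVec {d l : ℕ} (A : Fin l → Matrix (Fin d) (Fin d) ℝ)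
    (b : Fin l → EuclideanSpace ℝ (Fin d))
    (η : EuclideanSpace ℝ (Fin d)) (i : Fin d) : ConeSpace d l :=
  WithLp.toLp 2 fun x => match x with
  | Sum.inl i' => if i' = i then 1 else 0
  | Sum.inr (Sum.inl k) => qGrad A b k η i
  | Sum.inr (Sum.inr _) => 0

/-- The normal vector `n_j(η) = (−∂_1 q_j(η), …, −∂_d q_j(η), e_j, 0) ∈ ℝ^{n+1}`. -/
def nVec {d l : ℕ} (A : Fin l → Matrix (Fin d) (Fin d) ℝ)
    (b : Fin l → EuclideanSpace ℝ (Fin d))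
    (η : EuclideanSpace ℝ (Fin d)) (j : Fin l) : ConeSpace d l :=
  WithLp.toLp 2 fun x => match x with
  | Sum.inl i => -(qGrad A b j η i)
  | Sum.inr (Sum.inl k) => if k = j then 1 else 0
  | Sum.inr (Sum.inr _) => 0

/-- The lattice points `R(ρ²) = B_d(0,1) ∩ ρℤ^d`. -/
def latticeBall (d : ℕ) (ρ : ℝ) : Set (EuclideanSpace ℝ (Fin d)) :=
  {ξ | ‖ξ‖ < 1 ∧ ∃ z : Fin d → ℤ, ∀ i, ξ i = ρ * (z i : ℝ)}

/-- The `K`-dilated centered plank `K·Θ(σ, η)` (with `K = 1` this is `Θ(σ, η)`):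
all `ω = a c(η) + Σ b_i t_i(η) + Σ c_j n_j(η)` with `|a| ≤ Kσ²`,
`|b_i| ≤ K E r⁻¹ σ`, `|c_j| ≤ K E r⁻²`. -/
def plankGen {d l : ℕ} (A : Fin l → Matrix (Fin d) (Fin d) ℝ)
    (b : Fin l → EuclideanSpace ℝ (Fin d)) (c0 : Fin l → ℝ)
    (E r σ K : ℝ) (η : EuclideanSpace ℝ (Fin d)) : Set (ConeSpace d l) :=
  {ω | ∃ (a : ℝ) (bb : Fin d → ℝ) (cc : Fin l → ℝ),
    |a| ≤ K * σ ^ 2 ∧ (∀ i, |bb i| ≤ K * E * r⁻¹ * σ) ∧ (∀ j, |cc j| ≤ K * E * r⁻¹ ^ 2) ∧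
    ω = a • cVec A b c0 η + (∑ i, bb i • tVec A b η i) + ∑ j, cc j • nVec A b η j}

/-- `⋃ CP_σ`, the union of the centered planks `Θ(σ, η)`, `η ∈ R(r⁻²σ⁻²)`. -/
def unionCP {d l : ℕ} (A : Fin l → Matrix (Fin d) (Fin d) ℝ)
    (b : Fin l → EuclideanSpace ℝ (Fin d)) (c0 : Fin l → ℝ)
    (E r σ : ℝ) : Set (ConeSpace d l) :=
  ⋃ η ∈ latticeBall d (r⁻¹ * σ⁻¹), plankGen A b c0 E r σ 1 η

/-- `Ω_σ = ⋃CP_σ \ ⋃CP_{σ/2}` for `σ > r⁻¹`, and `Ω_{r⁻¹} = ⋃CP_{r⁻¹}`. -/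
def OmegaSet {d l : ℕ} (A : Fin l → Matrix (Fin d) (Fin d) ℝ)
    (b : Fin l → EuclideanSpace ℝ (Fin d)) (c0 : Fin l → ℝ)
    (E r σ : ℝ) : Set (ConeSpace d l) :=
  if σ = r⁻¹ then unionCP A b c0 E r σ
  else unionCP A b c0 E r σ \ unionCP A b c0 E r (σ / 2)

/-- The slab `θ(ξ)`: all `a c(ξ) + Σ b_i t_i(ξ) + Σ c_j n_j(ξ)` with `a ∈ [1/2, 1]`,
`|b_i| ≤ D r⁻¹`, `|c_j| ≤ D r⁻²`. -/
def slab {d l : ℕ} (A : Fin l → Matrix (Fin d) (Fin d) ℝ)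
    (b : Fin l → EuclideanSpace ℝ (Fin d)) (c0 : Fin l → ℝ)
    (D r : ℝ) (ξ : EuclideanSpace ℝ (Fin d)) : Set (ConeSpace d l) :=
  {ω | ∃ (a : ℝ) (bb : Fin d → ℝ) (cc : Fin l → ℝ),
    a ∈ Set.Icc (1/2 : ℝ) 1 ∧ (∀ i, |bb i| ≤ D * r⁻¹) ∧ (∀ j, |cc j| ≤ D * r⁻¹ ^ 2) ∧
    ω = a • cVec A b c0 ξ + (∑ i, bb i • tVec A b ξ i) + ∑ j, cc j • nVec A b ξ j}

/-- The Minkowski difference `θ̃(ξ) = θ(ξ) − θ(ξ)`. -/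
def slabDiff {d l : ℕ} (A : Fin l → Matrix (Fin d) (Fin d) ℝ)
    (b : Fin l → EuclideanSpace ℝ (Fin d)) (c0 : Fin l → ℝ)
    (D r : ℝ) (ξ : EuclideanSpace ℝ (Fin d)) : Set (ConeSpace d l) :=
  {ω | ∃ u ∈ slab A b c0 D r ξ, ∃ v ∈ slab A b c0 D r ξ, ω = u - v}

end

noncomputable section

/-!
Round `η` to the lattice `ρℤ^d`, `ρ = r⁻¹σ⁻¹`, to get `ξ` with `|ξ - η| ≲ ρ`, and let `G` be the
gradient matrix of `q` at `ξ`. If `ω - h c(ξ) = (X, Z, 0)`, then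
`ω = h c(ξ) + Σ ℓ'_i t_i(ξ) + Σ c'_j n_j(ξ)` exactly when `ℓ' - Gᵀc' = X` and `Gℓ' + c' = Z`,
i.e. `ℓ' = X + Gᵀc'` with `(1 + GGᵀ) c' = Z - GX`; as `1 + GGᵀ ≥ 1`, `‖c'‖ ≤ ‖Z - GX‖`.
Since `q` is quadratic with symmetric `A`, `Z - GX = h ⟨δ, Aδ⟩/2 + ⟨Aδ, ℓ⟩ + c + G ∇q(η)ᵀ c`
exactly, where `δ = η - ξ`, and because `σρ = r⁻¹` every term is `O(D r⁻²)`. Hence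
`c' = O(D r⁻²)` and `ℓ' = O(D r⁻¹σ)`.
-/

open Matrix

lemma abs_sum_mul_le_card_mul {ι : Type*} [Fintype ι] {f g : ι → ℝ} {F G : ℝ}
    (hf : ∀ i, |f i| ≤ F) (hg : ∀ i, |g i| ≤ G) :
    |∑ i, f i * g i| ≤ Fintype.card ι * (F * G) := by
  calc |∑ i, f i * g i| ≤ ∑ i, |f i * g i| := Finset.abs_sum_le_sum_abs _ _
    _ ≤ Finset.univ.card • (F * G) := Finset.sum_le_card_nsmul _ _ _ fun i _ => by
        rw [abs_mul]
        exact mul_le_mul (hf i) (hg i) (abs_nonneg _) ((abs_nonneg _).trans (hf i))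
    _ = Fintype.card ι * (F * G) := by rw [nsmul_eq_mul, Finset.card_univ]

lemma sum_sq_le_card_mul_sq {ι : Type*} [Fintype ι] {v : ι → ℝ} {B : ℝ}
    (hv : ∀ i, |v i| ≤ B) : ∑ i, v i ^ 2 ≤ Fintype.card ι * B ^ 2 := by
  calc ∑ i, v i ^ 2 ≤ Finset.univ.card • B ^ 2 := Finset.sum_le_card_nsmul _ _ _ fun i _ =>
        sq_le_sq' (neg_le_of_abs_le (hv i)) (le_of_abs_le (hv i))
    _ = Fintype.card ι * B ^ 2 := by rw [nsmul_eq_mul, Finset.card_univ]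

lemma EuclideanSpace.norm_le_sqrt_card_mul {ι : Type*} [Fintype ι] {x : EuclideanSpace ℝ ι}
    {B : ℝ} (hB : 0 ≤ B) (hx : ∀ i, |x i| ≤ B) : ‖x‖ ≤ √(Fintype.card ι) * B := by
  rw [EuclideanSpace.norm_eq, ← Real.sqrt_sq hB, ← Real.sqrt_mul (Nat.cast_nonneg _)]
  exact Real.sqrt_le_sqrt (by simpa only [Real.norm_eq_abs, sq_abs] using sum_sq_le_card_mul_sq hx)

lemma exists_lattice_point_abs_sub_le {ι : Type*} {ρ : ℝ} (hρ : 0 < ρ) (η : EuclideanSpace ℝ ι) :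
    ∃ ξ : EuclideanSpace ℝ ι, (∃ z : ι → ℤ, ∀ i, ξ i = ρ * z i) ∧ ∀ i, |ξ i - η i| ≤ ρ / 2 := by
  refine ⟨WithLp.toLp 2 fun i => ρ * round (η i / ρ), ⟨_, fun i => rfl⟩, fun i => ?_⟩
  calc |ρ * round (η i / ρ) - η i| = ρ * |η i / ρ - round (η i / ρ)| := by
        rw [abs_sub_comm, ← abs_of_pos hρ, ← abs_mul, abs_of_pos hρ, mul_sub,
          mul_div_cancel₀ _ hρ.ne']
    _ ≤ ρ * (1 / 2) := mul_le_mul_of_nonneg_left (abs_sub_round _) hρ.le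
    _ = ρ / 2 := by ring

namespace Matrix

lemma abs_mulVec_le {m n : Type*} [Fintype n] {M : Matrix m n ℝ} {x : n → ℝ} {K R : ℝ}
    (hM : ∀ i j, |M i j| ≤ K) (hx : ∀ j, |x j| ≤ R) (i : m) :
    |(M *ᵥ x) i| ≤ Fintype.card n * (K * R) :=
  abs_sum_mul_le_card_mul (hM i) hx

variable {m n : Type*} [Fintype m] [Fintype n] [DecidableEq m] (G : Matrix m n ℝ)

lemma exists_one_add_mul_transpose_mulVec_eq (v : m → ℝ) : ∃ c, (1 + G * Gᵀ) *ᵥ c = v := by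
  have hpd : (1 + G * Gᵀ).PosDef :=
    PosDef.one.add_posSemidef (by simpa using G.posSemidef_self_mul_conjTranspose)
  refine ⟨(1 + G * Gᵀ)⁻¹ *ᵥ v, ?_⟩
  rw [mulVec_mulVec, mul_nonsing_inv _ hpd.det_pos.ne'.isUnit, one_mulVec]

lemma dotProduct_self_le_of_one_add_mul_transpose_mulVec_eq {c v : m → ℝ}
    (h : (1 + G * Gᵀ) *ᵥ c = v) : c ⬝ᵥ c ≤ v ⬝ᵥ v := by
  have hcv : c ⬝ᵥ v = c ⬝ᵥ c + (Gᵀ *ᵥ c) ⬝ᵥ (Gᵀ *ᵥ c) := by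
    rw [← h, add_mulVec, one_mulVec, dotProduct_add, ← mulVec_mulVec, dotProduct_mulVec,
      mulVec_transpose]
  have hcs : (c ⬝ᵥ v) ^ 2 ≤ (c ⬝ᵥ c) * (v ⬝ᵥ v) := by
    simpa only [dotProduct, sq] using Finset.sum_mul_sq_le_sq_mul_sq Finset.univ c v
  have hc : 0 ≤ c ⬝ᵥ c := Finset.sum_nonneg fun i _ => mul_self_nonneg (c i)
  have hGc : 0 ≤ (Gᵀ *ᵥ c) ⬝ᵥ (Gᵀ *ᵥ c) := Finset.sum_nonneg fun i _ => mul_self_nonneg _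
  have hv : 0 ≤ v ⬝ᵥ v := Finset.sum_nonneg fun i _ => mul_self_nonneg (v i)
  nlinarith

lemma exists_abs_le_and_mulVec_add_transpose_mulVec_add_eq (X : n → ℝ) (Z : m → ℝ) {B : ℝ}
    (hB : ∀ k, |(Z - G *ᵥ X) k| ≤ B) :
    ∃ c : m → ℝ, (∀ k, |c k| ≤ √(Fintype.card m) * B) ∧ G *ᵥ (X + Gᵀ *ᵥ c) + c = Z := by
  obtain ⟨c, hc⟩ := G.exists_one_add_mul_transpose_mulVec_eq (Z - G *ᵥ X)
  refine ⟨c, fun j => ?_, ?_⟩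
  · have hcc := G.dotProduct_self_le_of_one_add_mul_transpose_mulVec_eq hc
    have hcj : c j ^ 2 ≤ c ⬝ᵥ c := by
      simpa only [dotProduct, sq] using
        Finset.single_le_sum (fun i _ => mul_self_nonneg (c i)) (Finset.mem_univ j)
    have hv : (Z - G *ᵥ X) ⬝ᵥ (Z - G *ᵥ X) ≤ Fintype.card m * B ^ 2 := by
      simpa only [dotProduct, sq] using sum_sq_le_card_mul_sq hB
    calc |c j| ≤ √(Fintype.card m * B ^ 2) := Real.abs_le_sqrt (by linarith)
      _ = √(Fintype.card m) * B := by
        rw [Real.sqrt_mul (Nat.cast_nonneg _), Real.sqrt_sq ((abs_nonneg _).trans (hB j))]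
  · rw [add_mulVec, one_mulVec] at hc
    rw [mulVec_add, mulVec_mulVec, add_assoc, add_comm (_ *ᵥ c), hc, add_sub_cancel]

end Matrix

section Frame

variable {d l : ℕ} (A : Fin l → Matrix (Fin d) (Fin d) ℝ) (b : Fin l → EuclideanSpace ℝ (Fin d))
  (c0 : Fin l → ℝ)

def gradMatrix (x : EuclideanSpace ℝ (Fin d)) : Matrix (Fin l) (Fin d) ℝ :=
  Matrix.of fun k i => qGrad A b k x i

def qVec (x : EuclideanSpace ℝ (Fin d)) : Fin l → ℝ :=
  fun k => qForm A b c0 k x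

def frameComb (x : EuclideanSpace ℝ (Fin d)) (a : ℝ) (ℓ : Fin d → ℝ) (cc : Fin l → ℝ) :
    ConeSpace d l :=
  a • cVec A b c0 x + (∑ i, ℓ i • tVec A b x i) + ∑ j, cc j • nVec A b x j

/-- `frameComb η a ℓ cc - a c(ξ)` has coordinates `(offsetXi η ξ a ℓ cc, offsetZeta η ξ a ℓ cc, 0)`;
these are the `X` and `Z` above. -/
def offsetXi (η ξ : EuclideanSpace ℝ (Fin d)) (a : ℝ) (ℓ : Fin d → ℝ) (cc : Fin l → ℝ) :
    Fin d → ℝ :=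
  a • (η - ξ : Fin d → ℝ) + ℓ - (gradMatrix A b η)ᵀ *ᵥ cc

def offsetZeta (η ξ : EuclideanSpace ℝ (Fin d)) (a : ℝ) (ℓ : Fin d → ℝ)
    (cc : Fin l → ℝ) : Fin l → ℝ :=
  a • (qVec A b c0 η - qVec A b c0 ξ) + gradMatrix A b η *ᵥ ℓ + cc

variable {A b c0}

lemma frameComb_apply_inl (x : EuclideanSpace ℝ (Fin d)) (a : ℝ) (ℓ : Fin d → ℝ)
    (cc : Fin l → ℝ) (i : Fin d) :
    frameComb A b c0 x a ℓ cc (Sum.inl i) = a * x i + ℓ i - ((gradMatrix A b x)ᵀ *ᵥ cc) i := by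
  simp [frameComb, cVec, tVec, nVec, gradMatrix, mulVec, dotProduct, mul_comm, sub_eq_add_neg]

lemma frameComb_apply_inr_inl (x : EuclideanSpace ℝ (Fin d)) (a : ℝ) (ℓ : Fin d → ℝ)
    (cc : Fin l → ℝ) (k : Fin l) :
    frameComb A b c0 x a ℓ cc (Sum.inr (Sum.inl k)) =
      a * qForm A b c0 k x + (gradMatrix A b x *ᵥ ℓ) k + cc k := by
  simp [frameComb, cVec, tVec, nVec, gradMatrix, mulVec, dotProduct, mul_comm]

lemma frameComb_apply_inr_inr (x : EuclideanSpace ℝ (Fin d)) (a : ℝ) (ℓ : Fin d → ℝ)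
    (cc : Fin l → ℝ) (u : Unit) :
    frameComb A b c0 x a ℓ cc (Sum.inr (Sum.inr u)) = a := by
  simp [frameComb, cVec, tVec, nVec]

lemma frameComb_eq_frameComb {η ξ : EuclideanSpace ℝ (Fin d)} {a : ℝ} {ℓ ℓ' : Fin d → ℝ}
    {cc cc' : Fin l → ℝ}
    (hxi : ℓ' - (gradMatrix A b ξ)ᵀ *ᵥ cc' = offsetXi A b η ξ a ℓ cc)
    (hzeta : gradMatrix A b ξ *ᵥ ℓ' + cc' = offsetZeta A b c0 η ξ a ℓ cc) :
    frameComb A b c0 η a ℓ cc = frameComb A b c0 ξ a ℓ' cc' := by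
  ext (i | k | u)
  · have := congrFun hxi i
    simp only [offsetXi, Pi.sub_apply, Pi.add_apply, Pi.smul_apply, smul_eq_mul] at this
    rw [frameComb_apply_inl, frameComb_apply_inl]
    linarith
  · have := congrFun hzeta k
    simp only [offsetZeta, qVec, Pi.sub_apply, Pi.add_apply, Pi.smul_apply, smul_eq_mul] at this
    rw [frameComb_apply_inr_inl, frameComb_apply_inr_inl]
    linarith
  · rw [frameComb_apply_inr_inr, frameComb_apply_inr_inr]

lemma qGrad_sub_qGrad (k : Fin l) (x y : EuclideanSpace ℝ (Fin d)) (i : Fin d) :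
    qGrad A b k x i - qGrad A b k y i = (A k *ᵥ (x - y)) i := by
  simp [qGrad, mulVec_sub]

lemma qForm_sub_qForm_sub_gradMatrix_mulVec {k : Fin l} (hA : (A k).IsSymm)
    (x y : EuclideanSpace ℝ (Fin d)) :
    qForm A b c0 k x - qForm A b c0 k y - (gradMatrix A b y *ᵥ (x - y)) k =
      1 / 2 * ((x - y) ⬝ᵥ (A k *ᵥ (x - y))) := by
  have hgrad : (gradMatrix A b y *ᵥ (x - y)) k = (A k *ᵥ y + (b k).ofLp) ⬝ᵥ (x - y) := by
    simp [gradMatrix, qGrad, mulVec, dotProduct]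
  have hsymm : x ⬝ᵥ (A k *ᵥ y) = y ⬝ᵥ (A k *ᵥ x) := by
    rw [dotProduct_mulVec, ← mulVec_transpose, hA.eq, dotProduct_comm]
  simp only [qForm, hgrad, WithLp.ofLp_sub, mulVec_sub, dotProduct_sub, sub_dotProduct,
    add_dotProduct]
  rw [dotProduct_comm (A k *ᵥ y), dotProduct_comm (b k).ofLp, dotProduct_comm (A k *ᵥ y) y, hsymm]
  ring

lemma offsetZeta_sub_mulVec_offsetXi (hsymm : ∀ k, (A k).IsSymm) (η ξ : EuclideanSpace ℝ (Fin d))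
    (a : ℝ) (ℓ : Fin d → ℝ) (cc : Fin l → ℝ) (k : Fin l) :
    (offsetZeta A b c0 η ξ a ℓ cc - gradMatrix A b ξ *ᵥ offsetXi A b η ξ a ℓ cc) k =
      a * (1 / 2 * ((η - ξ) ⬝ᵥ (A k *ᵥ (η - ξ)))) + (A k *ᵥ (η - ξ)) ⬝ᵥ ℓ + cc k
        + (gradMatrix A b ξ *ᵥ ((gradMatrix A b η)ᵀ *ᵥ cc)) k := by
  have hgrad : (gradMatrix A b η *ᵥ ℓ) k - (gradMatrix A b ξ *ᵥ ℓ) k = (A k *ᵥ (η - ξ)) ⬝ᵥ ℓ := by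
    simp only [mulVec, dotProduct, gradMatrix, of_apply, ← Finset.sum_sub_distrib, ← sub_mul,
      qGrad_sub_qGrad]
  rw [← qForm_sub_qForm_sub_gradMatrix_mulVec (hsymm k), ← hgrad]
  simp only [offsetZeta, offsetXi, qVec, mulVec_sub, mulVec_add, mulVec_smul, Pi.sub_apply,
    Pi.add_apply, Pi.smul_apply, smul_eq_mul]
  ring

end Frame

section Bounds

variable {d l : ℕ} {A : Fin l → Matrix (Fin d) (Fin d) ℝ} {b : Fin l → EuclideanSpace ℝ (Fin d)}
  {c0 : Fin l → ℝ} {K : ℝ}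

lemma abs_gradMatrix_le (hA : ∀ k i j, |A k i j| ≤ K) (hb : ∀ k i, |b k i| ≤ K)
    {x : EuclideanSpace ℝ (Fin d)} {R : ℝ} (hx : ∀ i, |x i| ≤ R) (k : Fin l) (i : Fin d) :
    |gradMatrix A b x k i| ≤ K * (d * R + 1) := by
  have hAx := Matrix.abs_mulVec_le (hA k) hx i
  rw [Fintype.card_fin] at hAx
  calc |gradMatrix A b x k i| ≤ |(A k *ᵥ x) i| + |b k i| := abs_add_le _ _
    _ ≤ K * (d * R + 1) := by linarith [hb k i]

lemma abs_offsetXi_le (hK : 0 ≤ K) (hA : ∀ k i j, |A k i j| ≤ K) (hb : ∀ k i, |b k i| ≤ K)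
    {η ξ : EuclideanSpace ℝ (Fin d)} {a D τ σ ρ : ℝ} {ℓ : Fin d → ℝ} {cc : Fin l → ℝ}
    (hη : ∀ i, |η i| ≤ 2) (hδ : ∀ i, |η i - ξ i| ≤ ρ) (ha : |a| ≤ σ ^ 2)
    (hℓ : ∀ i, |ℓ i| ≤ D * τ * σ) (hcc : ∀ j, |cc j| ≤ D * τ ^ 2)
    (hστ : σ * ρ = τ) (hτσ : τ ≤ σ) (hτ : 0 ≤ τ) (hD : 1 ≤ D) (i : Fin d) :
    |offsetXi A b η ξ a ℓ cc i| ≤ (2 + l * (K * (d * 2 + 1))) * (D * τ * σ) := by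
  have h₁ : |a * (η i - ξ i)| ≤ D * τ * σ :=
    calc |a * (η i - ξ i)| ≤ σ ^ 2 * ρ := by
          rw [abs_mul]; exact mul_le_mul ha (hδ i) (abs_nonneg _) (sq_nonneg σ)
      _ = 1 * τ * σ := by rw [← hστ]; ring
      _ ≤ D * τ * σ := by gcongr; exact hτ.trans hτσ
  have h₂ : |((gradMatrix A b η)ᵀ *ᵥ cc) i| ≤ l * (K * (d * 2 + 1) * (D * τ * σ)) := by
    have := Matrix.abs_mulVec_le (M := (gradMatrix A b η)ᵀ)
      (fun i j => abs_gradMatrix_le hA hb hη j i) hcc i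
    rw [Fintype.card_fin] at this
    have hτ₂ : D * τ ^ 2 ≤ D * τ * σ := by
      rw [sq, ← mul_assoc]; exact mul_le_mul_of_nonneg_left hτσ (mul_nonneg (by linarith) hτ)
    exact this.trans (by gcongr)
  have hXi : offsetXi A b η ξ a ℓ cc i = a * (η i - ξ i) + ℓ i - ((gradMatrix A b η)ᵀ *ᵥ cc) i :=
    rfl
  rw [hXi]
  linarith [abs_sub (a * (η i - ξ i) + ℓ i) (((gradMatrix A b η)ᵀ *ᵥ cc) i),
    abs_add_le (a * (η i - ξ i)) (ℓ i), hℓ i]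

lemma abs_offsetZeta_sub_mulVec_offsetXi_le (hsymm : ∀ k, (A k).IsSymm) (hK : 0 ≤ K)
    (hA : ∀ k i j, |A k i j| ≤ K) (hb : ∀ k i, |b k i| ≤ K)
    {η ξ : EuclideanSpace ℝ (Fin d)} {a D τ σ ρ : ℝ} {ℓ : Fin d → ℝ} {cc : Fin l → ℝ}
    (hη : ∀ i, |η i| ≤ 2) (hξ : ∀ i, |ξ i| ≤ 2) (hδ : ∀ i, |η i - ξ i| ≤ ρ) (ha : |a| ≤ σ ^ 2)
    (hℓ : ∀ i, |ℓ i| ≤ D * τ * σ) (hcc : ∀ j, |cc j| ≤ D * τ ^ 2)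
    (hστ : σ * ρ = τ) (hD : 1 ≤ D) (k : Fin l) :
    |(offsetZeta A b c0 η ξ a ℓ cc - gradMatrix A b ξ *ᵥ offsetXi A b η ξ a ℓ cc) k| ≤
      (2 * d ^ 2 * K + 1 + d * l * (K * (d * 2 + 1)) ^ 2) * (D * τ ^ 2) := by
  rw [offsetZeta_sub_mulVec_offsetXi hsymm]
  have hAδ : ∀ i, |(A k *ᵥ (η - ξ)) i| ≤ d * (K * ρ) := by
    simpa only [Fintype.card_fin] using Matrix.abs_mulVec_le (x := ⇑η - ⇑ξ) (hA k) hδ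
  have h₁ : |a * (1 / 2 * ((η - ξ) ⬝ᵥ (A k *ᵥ (η - ξ))))| ≤ d ^ 2 * K * (D * τ ^ 2) := by
    have hq := abs_sum_mul_le_card_mul (f := ⇑η - ⇑ξ) hδ hAδ
    rw [Fintype.card_fin] at hq
    calc |a * (1 / 2 * ((η - ξ) ⬝ᵥ (A k *ᵥ (η - ξ))))|
        = |a| * (1 / 2) * |(η - ξ) ⬝ᵥ (A k *ᵥ (η - ξ))| := by
          simp only [abs_mul, abs_div, abs_one, abs_two]; ring
      _ ≤ σ ^ 2 * (1 / 2) * (d * (ρ * (d * (K * ρ)))) := by gcongr; exact hq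
      _ = 1 / 2 * (d ^ 2 * K * τ ^ 2) := by rw [← hστ]; ring
      _ ≤ d ^ 2 * K * (D * τ ^ 2) := by
          nlinarith [mul_nonneg (mul_nonneg (mul_nonneg (sq_nonneg (d : ℝ)) hK) (sq_nonneg τ))
            (by linarith : 0 ≤ D - 1 / 2)]
  have h₂ : |(A k *ᵥ (η - ξ)) ⬝ᵥ ℓ| ≤ d ^ 2 * K * (D * τ ^ 2) := by
    have hq := abs_sum_mul_le_card_mul hAδ hℓ
    rw [Fintype.card_fin] at hq
    exact hq.trans_eq (by rw [← hστ]; ring)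
  have h₄ : |(gradMatrix A b ξ *ᵥ ((gradMatrix A b η)ᵀ *ᵥ cc)) k| ≤
      d * l * (K * (d * 2 + 1)) ^ 2 * (D * τ ^ 2) := by
    have hinner := Matrix.abs_mulVec_le (M := (gradMatrix A b η)ᵀ)
      (fun i j => abs_gradMatrix_le hA hb hη j i) hcc
    have hq := Matrix.abs_mulVec_le (abs_gradMatrix_le hA hb hξ) hinner k
    simp only [Fintype.card_fin] at hq
    exact hq.trans_eq (by ring)
  linarith [abs_add_le (a * (1 / 2 * ((η - ξ) ⬝ᵥ (A k *ᵥ (η - ξ))))) ((A k *ᵥ (η - ξ)) ⬝ᵥ ℓ),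
    abs_add_le (a * (1 / 2 * ((η - ξ) ⬝ᵥ (A k *ᵥ (η - ξ)))) + (A k *ᵥ (η - ξ)) ⬝ᵥ ℓ)
    (cc k), abs_add_le (a * (1 / 2 * ((η - ξ) ⬝ᵥ (A k *ᵥ (η - ξ)))) + (A k *ᵥ (η - ξ)) ⬝ᵥ ℓ + cc k)
    ((gradMatrix A b ξ *ᵥ ((gradMatrix A b η)ᵀ *ᵥ cc)) k), hcc k]

lemma exists_abs_entry_le (A : Fin l → Matrix (Fin d) (Fin d) ℝ)
    (b : Fin l → EuclideanSpace ℝ (Fin d)) :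
    ∃ K : ℝ, 0 ≤ K ∧ (∀ k i j, |A k i j| ≤ K) ∧ ∀ k i, |b k i| ≤ K := by
  obtain ⟨K₁, hK₁⟩ := Finite.exists_le fun p : Fin l × Fin d × Fin d => |A p.1 p.2.1 p.2.2|
  obtain ⟨K₂, hK₂⟩ := Finite.exists_le fun p : Fin l × Fin d => |b p.1 p.2|
  exact ⟨max 0 (max K₁ K₂), le_max_left _ _,
    fun k i j => (hK₁ (k, i, j)).trans ((le_max_left _ _).trans (le_max_right _ _)),
    fun k i => (hK₂ (k, i)).trans ((le_max_right _ _).trans (le_max_right _ _))⟩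

lemma exists_recentering_const (hsymm : ∀ k, (A k).IsSymm) :
    ∃ C : ℝ, 0 < C ∧ ∀ (η ξ : EuclideanSpace ℝ (Fin d)) (a D τ σ ρ : ℝ) (ℓ : Fin d → ℝ)
      (cc : Fin l → ℝ), (∀ i, |η i| ≤ 2) → (∀ i, |ξ i| ≤ 2) → (∀ i, |η i - ξ i| ≤ ρ) →
      |a| ≤ σ ^ 2 → (∀ i, |ℓ i| ≤ D * τ * σ) → (∀ j, |cc j| ≤ D * τ ^ 2) →
      σ * ρ = τ → τ ≤ σ → 0 ≤ τ → 1 ≤ D →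
      ∃ (ℓ' : Fin d → ℝ) (cc' : Fin l → ℝ),
        (∀ i, |ℓ' i| ≤ C * D * τ * σ) ∧ (∀ j, |cc' j| ≤ C * D * τ ^ 2) ∧
        frameComb A b c0 η a ℓ cc = frameComb A b c0 ξ a ℓ' cc' := by
  obtain ⟨K, hK, hA, hb⟩ := exists_abs_entry_le A b
  set g := K * (d * 2 + 1)
  set Cc := √l * (2 * d ^ 2 * K + 1 + d * l * g ^ 2)
  have hlg : 0 ≤ l * g := mul_nonneg (Nat.cast_nonneg l) (mul_nonneg hK (by positivity))
  have hCc : 0 ≤ Cc := by positivity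
  refine ⟨2 + l * g + l * g * Cc + Cc, by nlinarith [mul_nonneg hlg hCc], ?_⟩
  intro η ξ a D τ σ ρ ℓ cc hη hξ hδ ha hℓ hcc hστ hτσ hτ hD
  obtain ⟨cc', hcc', hsys⟩ :=
    (gradMatrix A b ξ).exists_abs_le_and_mulVec_add_transpose_mulVec_add_eq
      (offsetXi A b η ξ a ℓ cc) (offsetZeta A b c0 η ξ a ℓ cc)
      (abs_offsetZeta_sub_mulVec_offsetXi_le hsymm hK hA hb hη hξ hδ ha hℓ hcc hστ hD)
  simp only [Fintype.card_fin] at hcc'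
  replace hcc' : ∀ k, |cc' k| ≤ Cc * (D * τ ^ 2) := fun k =>
    (hcc' k).trans_eq (mul_assoc _ _ _).symm
  have hτ₂ : D * τ ^ 2 ≤ D * τ * σ := by rw [sq, ← mul_assoc]; gcongr
  refine ⟨offsetXi A b η ξ a ℓ cc + (gradMatrix A b ξ)ᵀ *ᵥ cc', cc', fun i => ?_, fun j => ?_,
    frameComb_eq_frameComb (add_sub_cancel_right _ _) hsys⟩
  · have hXi := abs_offsetXi_le hK hA hb hη hδ ha hℓ hcc hστ hτσ hτ hD i
    have hcorr := Matrix.abs_mulVec_le (M := (gradMatrix A b ξ)ᵀ)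
      (fun i j => abs_gradMatrix_le hA hb hξ j i) hcc' i
    rw [Fintype.card_fin] at hcorr
    have hcorr' : l * (g * (Cc * (D * τ ^ 2))) ≤ l * g * Cc * (D * τ * σ) := by
      rw [← mul_assoc, ← mul_assoc]; gcongr
    have hσ : 0 ≤ D * τ * σ := (by positivity : 0 ≤ D * τ ^ 2).trans hτ₂
    calc |(offsetXi A b η ξ a ℓ cc + (gradMatrix A b ξ)ᵀ *ᵥ cc') i|
        ≤ |offsetXi A b η ξ a ℓ cc i| + |((gradMatrix A b ξ)ᵀ *ᵥ cc') i| := abs_add_le _ _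
      _ ≤ (2 + l * g) * (D * τ * σ) + l * g * Cc * (D * τ * σ) :=
        add_le_add hXi (hcorr.trans hcorr')
      _ ≤ (2 + l * g + l * g * Cc + Cc) * D * τ * σ := by nlinarith [mul_nonneg hCc hσ]
  · calc |cc' j| ≤ Cc * (D * τ ^ 2) := hcc' j
      _ ≤ (2 + l * g + l * g * Cc + Cc) * (D * τ ^ 2) := by
          gcongr; nlinarith [mul_nonneg hlg hCc]
      _ = (2 + l * g + l * g * Cc + Cc) * D * τ ^ 2 := by ring

end Bounds

/-- **Re-centering lemma (Lemma on representations, I).** There is `C > 0` (depending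
on the quadratic forms and `D`) such that: for `r ≥ 1`, dyadic `σ ∈ [r⁻¹, 1]`,
`|h| ≤ σ²`, `η ∈ B_d(0,1)`, any point
`ω = h c(η) + Σ ℓ_i t_i(η) + Σ c_j n_j(η)` with `|ℓ_i| ≤ D r⁻¹ σ`, `|c_j| ≤ D r⁻²`
can be re-represented at a lattice point `ξ ∈ r⁻¹σ⁻¹ℤ^d` with `‖ξ − η‖ ≤ C r⁻¹σ⁻¹`:
`ω = h c(ξ) + Σ ℓ'_i t_i(ξ) + Σ c'_j n_j(ξ)` with `|ℓ'_i| ≤ C D r⁻¹ σ`,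
`|c'_j| ≤ C D r⁻²`. -/
theorem recentering_representation
    (d l : ℕ) (A : Fin l → Matrix (Fin d) (Fin d) ℝ) (hsymm : ∀ k, (A k).IsSymm)
    (b : Fin l → EuclideanSpace ℝ (Fin d)) (c0 : Fin l → ℝ)
    (D : ℝ) (hD : 1 ≤ D) :
    ∃ C : ℝ, 0 < C ∧
      ∀ r : ℝ, 1 ≤ r →
      ∀ σ : ℝ, (∃ z : ℤ, σ = 2 ^ z) → r⁻¹ ≤ σ → σ ≤ 1 →
      ∀ h : ℝ, |h| ≤ σ ^ 2 →
      ∀ η : EuclideanSpace ℝ (Fin d), ‖η‖ < 1 →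
      ∀ (ℓ : Fin d → ℝ) (cc : Fin l → ℝ) (ω : ConeSpace d l),
        (∀ i, |ℓ i| ≤ D * r⁻¹ * σ) → (∀ j, |cc j| ≤ D * r⁻¹ ^ 2) →
        ω = h • cVec A b c0 η + (∑ i, ℓ i • tVec A b η i) + ∑ j, cc j • nVec A b η j →
        ∃ ξ : EuclideanSpace ℝ (Fin d),
          (∃ z : Fin d → ℤ, ∀ i, ξ i = r⁻¹ * σ⁻¹ * (z i : ℝ)) ∧
          ‖ξ - η‖ ≤ C * r⁻¹ * σ⁻¹ ∧
          ∃ (ℓ' : Fin d → ℝ) (cc' : Fin l → ℝ),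
            (∀ i, |ℓ' i| ≤ C * D * r⁻¹ * σ) ∧ (∀ j, |cc' j| ≤ C * D * r⁻¹ ^ 2) ∧
            ω = h • cVec A b c0 ξ + (∑ i, ℓ' i • tVec A b ξ i)
              + ∑ j, cc' j • nVec A b ξ j := by
  obtain ⟨C, hC, hrecenter⟩ := exists_recentering_const (b := b) (c0 := c0) hsymm
  refine ⟨C + √d, by positivity, ?_⟩
  intro r hr σ _ hrσ hσ1 h hh η hη ℓ cc ω hℓ hcc hω
  have hr₀ : 0 < r⁻¹ := by positivity
  have hσ₀ : 0 < σ := hr₀.trans_le hrσ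
  set ρ := r⁻¹ * σ⁻¹
  have hρ₀ : 0 < ρ := by positivity
  have hρ₁ : ρ ≤ 1 := by
    rw [mul_inv_le_iff₀ hσ₀]; linarith
  obtain ⟨ξ, hξ, hξη⟩ := exists_lattice_point_abs_sub_le hρ₀ η
  have hηi : ∀ i, |η i| ≤ 1 := fun i => (PiLp.norm_apply_le η i).trans hη.le
  have hδ : ∀ i, |η i - ξ i| ≤ ρ := fun i => by rw [abs_sub_comm]; linarith [hξη i]
  have hξi : ∀ i, |ξ i| ≤ 2 := fun i => by
    linarith [abs_sub_abs_le_abs_sub (ξ i) (η i), hηi i, hξη i]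
  obtain ⟨ℓ', cc', hℓ', hcc', hframe⟩ := hrecenter η ξ h D r⁻¹ σ ρ ℓ cc
    (fun i => (hηi i).trans one_le_two) hξi hδ hh hℓ hcc (by simp only [ρ]; field_simp) hrσ
    hr₀.le hD
  have hnorm : ‖ξ - η‖ ≤ √d * (ρ / 2) := by
    simpa only [Fintype.card_fin] using EuclideanSpace.norm_le_sqrt_card_mul (x := ξ - η)
      (by positivity) (fun i => by simpa only [PiLp.sub_apply] using hξη i)
  refine ⟨ξ, hξ, ?_, ℓ', cc', fun i => (hℓ' i).trans ?_, fun j => (hcc' j).trans ?_,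
    hω.trans hframe⟩
  · calc ‖ξ - η‖ ≤ √d * (ρ / 2) := hnorm
      _ ≤ (C + √d) * ρ := by nlinarith [Real.sqrt_nonneg d]
      _ = (C + √d) * r⁻¹ * σ⁻¹ := by ring
  all_goals gcongr; linarith [Real.sqrt_nonneg d]

end
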